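/- arXiv:1805.10529 — 2 statements merged into one kernel-verified Lean document; each statement's English description precedes it below -/
import Mathlib

section
/- Let A, B be positive invertible operators, Φ, Ψ unital positive linear maps, x a unit vector, and 0 < t ≤ 1/2. Then (1-t)⟨Φ(A)x,x⟩ + t⟨Ψ(B)x,x⟩ - ⟨Ψ(B)x,x⟩^t ⟨Φ(A^{1-t})x,x⟩ ≤ 2R(½(⟨Φ(A)x,x⟩ + ⟨Ψ(B)x,x⟩) - ⟨Φ(A^{1/2})x,x⟩⟨Ψ(B)x,x⟩^{1/2}) - r₀(⟨Φ(A^{1/2})x,x⟩⟨Ψ(B)x,x⟩^{1/2} + ⟨Ψ(B)x,x⟩ - 2⟨Φ(A^{1/4})x,x⟩⟨Ψ(B)x,x⟩^{3/4}), where R = max{t,1-t}, r = min{t,1-t}, r₀ = min{2r,1-2r}. -/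
open scoped NNReal InnerProductSpace

variable {H : Type*} [NormedAddCommGroup H] [InnerProductSpace ℂ H] [CompleteSpace H]

/-- The real number `⟨T x, x⟩` for a (positive) operator `T` and vector `x`. -/
noncomputable def ip (T : H →L[ℂ] H) (x : H) : ℝ := (⟪T x, x⟫_ℂ).re


/-- Core scalar inequality: for `1 ≤ p ≤ 2` and `μ ≥ 0`,
`p μ + (1-p) + min (p-1) (2-p) (√μ - 1)² ≤ μ^p`. -/
lemma core_ineq {p : ℝ} (hp1 : 1 ≤ p) (hp2 : p ≤ 2) {μ : ℝ} (hμ : 0 ≤ μ) :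
    p * μ + (1 - p) + min (p - 1) (2 - p) * (μ ^ (1/2:ℝ) - 1) ^ 2 ≤ μ ^ p := by
  set ν := μ ^ (1/2:ℝ) with hνdef
  have hν0 : 0 ≤ ν := Real.rpow_nonneg hμ _
  have hν2 : ν ^ 2 = μ := by
    rw [hνdef, ← Real.rpow_natCast (μ ^ (1/2:ℝ)) 2, ← Real.rpow_mul hμ]
    norm_num
  have hμp : μ ^ p = ν ^ (2 * p) := by
    rw [hνdef, ← Real.rpow_mul hμ]
    congr 1; ring
  rw [hμp, ← hν2]
  rcases eq_or_lt_of_le hν0 with h0 | hνpos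
  · rw [← h0]
    have h2p : ((0:ℝ)) ^ (2*p) = 0 := Real.zero_rpow (by nlinarith)
    rw [h2p]
    have := min_le_left (p-1) (2-p)
    nlinarith
  · have hX : 0 ≤ ν ^ (2*p) := Real.rpow_nonneg hν0 _
    rcases le_total (p-1) (2-p) with hc | hc
    · rw [min_eq_left hc]
      have h2p1 : (0:ℝ) < 2*p - 1 := by linarith
      have w1 : (0:ℝ) ≤ 1/(2*p-1) := by positivity
      have w2 : (0:ℝ) ≤ (2*p-2)/(2*p-1) := by
        apply div_nonneg <;> linarith
      have hsum : 1/(2*p-1) + (2*p-2)/(2*p-1) = 1 := by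
        field_simp
        ring
      have hgm := Real.geom_mean_le_arith_mean2_weighted w1 w2 hX hν0 hsum
      have hL : (ν ^ (2*p)) ^ (1/(2*p-1)) * ν ^ ((2*p-2)/(2*p-1)) = ν ^ 2 := by
        rw [← Real.rpow_mul hν0, ← Real.rpow_add hνpos, ← Real.rpow_natCast ν 2]
        congr 1
        field_simp
        ring
      rw [hL] at hgm
      have h3 := mul_le_mul_of_nonneg_left hgm h2p1.le
      have hne : (2*p-1) ≠ 0 := ne_of_gt h2p1
      have e1 : (2*p-1) * (1/(2*p-1) * ν ^ (2*p) + (2*p-2)/(2*p-1) * ν)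
          = ν ^ (2*p) + (2*p-2)*ν := by
        field_simp
      rw [e1] at h3
      nlinarith [h3]
    · rw [min_eq_right hc]
      have w1 : (0:ℝ) ≤ (1:ℝ)/2 := by norm_num
      have w2 : (0:ℝ) ≤ 2 - p := by linarith
      have w3 : (0:ℝ) ≤ (2*p-3)/2 := by linarith
      have hsum : (1:ℝ)/2 + (2-p) + (2*p-3)/2 = 1 := by ring
      have hgm := Real.geom_mean_le_arith_mean3_weighted w1 w2 w3 hX hν0 zero_le_one hsum
      have hL : (ν ^ (2*p)) ^ ((1:ℝ)/2) * ν ^ (2-p) * (1:ℝ) ^ ((2*p-3)/2) = ν ^ 2 := by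
        rw [Real.one_rpow, mul_one, ← Real.rpow_mul hν0, ← Real.rpow_add hνpos,
          ← Real.rpow_natCast ν 2]
        congr 1
        ring
      rw [hL] at hgm
      nlinarith [hgm]

/-- Refined reverse Young inequality (Zhao–Wu), scalar form. -/
lemma key_ineq {t : ℝ} (ht0 : 0 < t) (ht : t ≤ 1/2) {b lam : ℝ} (hb : 0 ≤ b) (hlam : 0 ≤ lam) :
    (1-t)*lam + t*b + min (2*t) (1-2*t) *
        (lam ^ (1/2:ℝ) * b ^ (1/2:ℝ) + b - 2*(lam ^ (1/4:ℝ) * b ^ (3/4:ℝ)))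
      ≤ b ^ t * lam ^ (1-t) + (1-t)*(lam + b - 2*(lam ^ (1/2:ℝ) * b ^ (1/2:ℝ))) := by
  rcases eq_or_lt_of_le hb with hb0 | hbpos
  · rw [← hb0]
    rw [Real.zero_rpow (by norm_num : (1/2:ℝ) ≠ 0),
        Real.zero_rpow (by norm_num : (3/4:ℝ) ≠ 0),
        Real.zero_rpow (ne_of_gt ht0)]
    ring_nf
    nlinarith [Real.rpow_nonneg hlam (1-t)]
  · set r₀ := min (2*t) (1-2*t) with hr₀def
    set μ := lam ^ (1/2:ℝ) * (b ^ (1/2:ℝ))⁻¹ with hμdef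
    have hb12 : (0:ℝ) < b ^ (1/2:ℝ) := Real.rpow_pos_of_pos hbpos _
    have hb14 : (0:ℝ) < b ^ (1/4:ℝ) := Real.rpow_pos_of_pos hbpos _
    have hb34 : (0:ℝ) < b ^ (3/4:ℝ) := Real.rpow_pos_of_pos hbpos _
    have hb1t : (0:ℝ) < b ^ (1-t) := Real.rpow_pos_of_pos hbpos _
    have hμ0 : 0 ≤ μ := mul_nonneg (Real.rpow_nonneg hlam _) (inv_pos.mpr hb12).le
    have hp1 : (1:ℝ) ≤ 2 - 2*t := by linarith
    have hp2 : (2:ℝ) - 2*t ≤ 2 := by linarith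
    have hmin : min (2-2*t-1) (2-(2-2*t)) = r₀ := by
      rw [hr₀def, min_comm]; congr 1 <;> ring
    have hcore' : (2-2*t) * μ + (1-(2-2*t)) + r₀ * (μ ^ (1/2:ℝ) - 1)^2
        ≤ μ ^ (2-2*t) := by
      have h := core_ineq hp1 hp2 hμ0
      rw [hmin] at h
      exact h
    have H := mul_le_mul_of_nonneg_left hcore' hb
    -- auxiliary rpow identities
    have hbt : b ^ t * b ^ (1-t) = b := by
      rw [← Real.rpow_add hbpos]; norm_num
    have hbhalf : b ^ (1/2:ℝ) * b ^ (1/2:ℝ) = b := by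
      rw [← Real.rpow_add hbpos]; norm_num
    have hb34q : b ^ (3/4:ℝ) * b ^ (1/4:ℝ) = b := by
      rw [← Real.rpow_add hbpos]; norm_num
    have hμpow : μ ^ (2-2*t) = lam ^ (1-t) * (b ^ (1-t))⁻¹ := by
      rw [hμdef, Real.mul_rpow (Real.rpow_nonneg hlam _) (inv_nonneg.mpr hb12.le),
          Real.inv_rpow (Real.rpow_nonneg hb _), ← Real.rpow_mul hlam, ← Real.rpow_mul hb]
      have h1 : (1/2:ℝ)*(2-2*t) = 1-t := by ring
      rw [h1]
    have hμhalf : μ ^ (1/2:ℝ) = lam ^ (1/4:ℝ) * (b ^ (1/4:ℝ))⁻¹ := by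
      rw [hμdef, Real.mul_rpow (Real.rpow_nonneg hlam _) (inv_nonneg.mpr hb12.le),
          Real.inv_rpow (Real.rpow_nonneg hb _), ← Real.rpow_mul hlam, ← Real.rpow_mul hb]
      norm_num
    have hq1 : b * (b ^ (1-t))⁻¹ = b ^ t := by
      rw [← div_eq_mul_inv, div_eq_iff (ne_of_gt hb1t)]
      exact hbt.symm
    have hq2 : b * (b ^ (1/2:ℝ))⁻¹ = b ^ (1/2:ℝ) := by
      rw [← div_eq_mul_inv, div_eq_iff (ne_of_gt hb12)]
      exact hbhalf.symm
    have hq3 : b * (b ^ (1/4:ℝ))⁻¹ = b ^ (3/4:ℝ) := by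
      rw [← div_eq_mul_inv, div_eq_iff (ne_of_gt hb14)]
      exact hb34q.symm
    have e1 : b * μ ^ (2-2*t) = b ^ t * lam ^ (1-t) := by
      rw [hμpow]
      calc b * (lam ^ (1-t) * (b ^ (1-t))⁻¹) = lam ^ (1-t) * (b * (b ^ (1-t))⁻¹) := by ring
        _ = b ^ t * lam ^ (1-t) := by rw [hq1]; ring
    have e2 : b * μ = lam ^ (1/2:ℝ) * b ^ (1/2:ℝ) := by
      rw [hμdef]
      calc b * (lam ^ (1/2:ℝ) * (b ^ (1/2:ℝ))⁻¹)
          = lam ^ (1/2:ℝ) * (b * (b ^ (1/2:ℝ))⁻¹) := by ring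
        _ = lam ^ (1/2:ℝ) * b ^ (1/2:ℝ) := by rw [hq2]
    have e4 : b * μ ^ (1/2:ℝ) = lam ^ (1/4:ℝ) * b ^ (3/4:ℝ) := by
      rw [hμhalf]
      calc b * (lam ^ (1/4:ℝ) * (b ^ (1/4:ℝ))⁻¹)
          = lam ^ (1/4:ℝ) * (b * (b ^ (1/4:ℝ))⁻¹) := by ring
        _ = lam ^ (1/4:ℝ) * b ^ (3/4:ℝ) := by rw [hq3]
    have hsq : (μ ^ (1/2:ℝ)) ^ 2 = μ := by
      rw [← Real.rpow_natCast (μ ^ (1/2:ℝ)) 2, ← Real.rpow_mul hμ0]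
      norm_num
    have e5 : b * ((μ ^ (1/2:ℝ) - 1)^2)
        = lam ^ (1/2:ℝ) * b ^ (1/2:ℝ) - 2*(lam ^ (1/4:ℝ) * b ^ (3/4:ℝ)) + b := by
      calc b * ((μ ^ (1/2:ℝ) - 1)^2) = b*μ - 2*(b*μ ^ (1/2:ℝ)) + b := by
            linear_combination b * hsq
        _ = _ := by rw [e2, e4]
    have H2 : (2-2*t)*(b*μ) + (1-(2-2*t))*b + r₀*(b*((μ ^ (1/2:ℝ) - 1)^2))
        ≤ b * μ ^ (2-2*t) := by
      have hr : b * ((2-2*t) * μ + (1-(2-2*t)) + r₀ * (μ ^ (1/2:ℝ) - 1)^2)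
          = (2-2*t)*(b*μ) + (1-(2-2*t))*b + r₀*(b*((μ ^ (1/2:ℝ) - 1)^2)) := by ring
      linarith [H, hr.le, hr.ge]
    rw [e1, e2, e5] at H2
    nlinarith [H2]



lemma rpow_eq_cfc_aux (A : H →L[ℂ] H) (hA : 0 ≤ A) (p : ℝ) :
    A ^ p = cfc (fun l : ℝ => l ^ p) A := by
  rw [← CFC.rpow_eq_pow, CFC.rpow, cfc_nnreal_eq_real _ A hA]
  apply cfc_congr
  intro l hl
  have h0 : 0 ≤ l := spectrum_nonneg_of_nonneg hA hl
  simp [Real.toNNReal, NNReal.rpow_eq_pow, NNReal.coe_rpow, max_eq_left h0]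

lemma cfc_comb_aux (A : H →L[ℂ] H) (hA : 0 ≤ A) (c₀ c₁ c₂ c₃ : ℝ) (p q : ℝ)
    (hp : 0 < p) (hq : 0 < q) :
    cfc (fun l : ℝ => c₀ + c₁ * l + c₂ * l ^ p + c₃ * l ^ q) A
      = c₀ • (1 : H →L[ℂ] H) + c₁ • A + c₂ • (A ^ p) + c₃ • (A ^ q) := by
  have hsa : IsSelfAdjoint A := .of_nonneg hA
  have cp : Continuous fun l : ℝ => l ^ p :=
    continuous_iff_continuousAt.mpr fun l => Real.continuousAt_rpow_const l p (Or.inr hp.le)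
  have cq : Continuous fun l : ℝ => l ^ q :=
    continuous_iff_continuousAt.mpr fun l => Real.continuousAt_rpow_const l q (Or.inr hq.le)
  have h01 : ContinuousOn (fun l : ℝ => c₀ + c₁ * l) (spectrum ℝ A) :=
    (continuous_const.add (continuous_const.mul continuous_id)).continuousOn
  have h12p : ContinuousOn (fun l : ℝ => c₀ + c₁ * l + c₂ * l ^ p) (spectrum ℝ A) :=
    ((continuous_const.add (continuous_const.mul continuous_id)).add
      (continuous_const.mul cp)).continuousOn
  calc cfc (fun l : ℝ => c₀ + c₁ * l + c₂ * l ^ p + c₃ * l ^ q) A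
      = cfc (fun l : ℝ => c₀ + c₁ * l + c₂ * l ^ p) A + cfc (fun l : ℝ => c₃ * l ^ q) A :=
        cfc_add A _ _ h12p (continuous_const.mul cq).continuousOn
    _ = (cfc (fun l : ℝ => c₀ + c₁ * l) A + cfc (fun l : ℝ => c₂ * l ^ p) A)
          + cfc (fun l : ℝ => c₃ * l ^ q) A := by
        rw [cfc_add (a := A) (fun l : ℝ => c₀ + c₁ * l) (fun l : ℝ => c₂ * l ^ p) h01 (continuous_const.mul cp).continuousOn]
    _ = ((algebraMap ℝ (H →L[ℂ] H) c₀ + cfc (fun l : ℝ => c₁ * l) A)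
          + cfc (fun l : ℝ => c₂ * l ^ p) A) + cfc (fun l : ℝ => c₃ * l ^ q) A := by
        rw [cfc_const_add c₀ (fun l : ℝ => c₁ * l) A (by exact (continuous_const.mul continuous_id).continuousOn) hsa]
    _ = c₀ • (1 : H →L[ℂ] H) + c₁ • A + c₂ • (A ^ p) + c₃ • (A ^ q) := by
        rw [cfc_const_mul_id c₁ A hsa, cfc_const_mul c₂ _ A cp.continuousOn,
          cfc_const_mul c₃ _ A cq.continuousOn, ← rpow_eq_cfc_aux A hA p, ← rpow_eq_cfc_aux A hA q,
          Algebra.algebraMap_eq_smul_one]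

lemma ip_add (S T : H →L[ℂ] H) (x : H) : ip (S + T) x = ip S x + ip T x := by
  simp [ip, ContinuousLinearMap.add_apply, inner_add_left]

lemma ip_smul (r : ℝ) (T : H →L[ℂ] H) (x : H) : ip (r • T) x = r * ip T x := by
  simp only [ip, ContinuousLinearMap.smul_apply]
  rw [RCLike.real_smul_eq_coe_smul (K := ℂ), inner_smul_left]
  simp [Complex.conj_ofReal, Complex.mul_re]

lemma ip_one {x : H} (hx : ‖x‖ = 1) : ip (1 : H →L[ℂ] H) x = 1 := by
  simp [ip, ContinuousLinearMap.one_apply, inner_self_eq_norm_sq_to_K, hx]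

lemma ip_nonneg {T : H →L[ℂ] H} (h : 0 ≤ T) (x : H) : 0 ≤ ip T x := by
  rw [ContinuousLinearMap.nonneg_iff_isPositive] at h
  exact h.re_inner_nonneg_left x

lemma ip_mono {S T : H →L[ℂ] H} (h : S ≤ T) (x : H) : ip S x ≤ ip T x := by
  have h' := (ContinuousLinearMap.le_def S T).mp h
  have h2 : ip T x - ip S x = (⟪(T - S) x, x⟫_ℂ).re := by
    simp [ip, ContinuousLinearMap.sub_apply, inner_sub_left]
  have h3 : (0:ℝ) ≤ (⟪(T - S) x, x⟫_ℂ).re := h'.re_inner_nonneg_left x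
  linarith

lemma ipPhi_mono (Φ : (H →L[ℂ] H) →ₗ[ℂ] (H →L[ℂ] H))
    (hΦ : ∀ X : H →L[ℂ] H, 0 ≤ X → 0 ≤ Φ X) {S T : H →L[ℂ] H} (h : S ≤ T) (x : H) :
    ip (Φ S) x ≤ ip (Φ T) x := by
  have h0 : (0:H →L[ℂ] H) ≤ T - S := by
    rw [ContinuousLinearMap.nonneg_iff_isPositive]
    simpa using (ContinuousLinearMap.le_def S T).mp h
  have h1 : (0:H →L[ℂ] H) ≤ Φ T - Φ S := by
    rw [← map_sub]
    exact hΦ _ h0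
  have h2 : Φ S ≤ Φ T := by
    rw [ContinuousLinearMap.le_def]
    exact (ContinuousLinearMap.nonneg_iff_isPositive _).mp h1
  exact ip_mono h2 x

/-- Theorem 2.8(i), upper bound: reverse for two unital positive linear maps,
`0 < t ≤ 1/2`. -/
theorem thm_two_maps_upper (Φ Ψ : (H →L[ℂ] H) →ₗ[ℂ] (H →L[ℂ] H))
    (hΦ : ∀ X : H →L[ℂ] H, 0 ≤ X → 0 ≤ Φ X) (hΦ1 : Φ 1 = 1)
    (hΨ : ∀ X : H →L[ℂ] H, 0 ≤ X → 0 ≤ Ψ X) (hΨ1 : Ψ 1 = 1)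
    (A B : H →L[ℂ] H) (hA : 0 ≤ A) (hA' : IsUnit A) (hB : 0 ≤ B) (hB' : IsUnit B)
    (x : H) (hx : ‖x‖ = 1) (t : ℝ) (ht0 : 0 < t) (ht : t ≤ 1 / 2) :
    (1 - t) * ip (Φ A) x + t * ip (Ψ B) x - ip (Ψ B) x ^ t * ip (Φ (A ^ (1 - t))) x
      ≤ 2 * max t (1 - t)
          * ((ip (Φ A) x + ip (Ψ B) x) / 2
              - ip (Φ (A ^ ((1 : ℝ) / 2))) x * ip (Ψ B) x ^ ((1 : ℝ) / 2))
        - min (2 * min t (1 - t)) (1 - 2 * min t (1 - t))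
          * (ip (Φ (A ^ ((1 : ℝ) / 2))) x * ip (Ψ B) x ^ ((1 : ℝ) / 2) + ip (Ψ B) x
              - 2 * ip (Φ (A ^ ((1 : ℝ) / 4))) x * ip (Ψ B) x ^ ((3 : ℝ) / 4)) := by
  have hb : 0 ≤ ip (Ψ B) x := ip_nonneg (hΨ B hB) x
  set b : ℝ := ip (Ψ B) x with hbdef
  have ht1 : t ≤ 1 - t := by linarith
  have h1t : (0:ℝ) < 1 - t := by linarith
  have hAspec : ∀ l ∈ spectrum ℝ A, (0:ℝ) ≤ l := fun l hl => spectrum_nonneg_of_nonneg hA hl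
  have c12 : Continuous fun l : ℝ => l ^ ((1:ℝ)/2) :=
    continuous_iff_continuousAt.mpr fun l => Real.continuousAt_rpow_const l _ (Or.inr (by norm_num))
  have c14 : Continuous fun l : ℝ => l ^ ((1:ℝ)/4) :=
    continuous_iff_continuousAt.mpr fun l => Real.continuousAt_rpow_const l _ (Or.inr (by norm_num))
  have c1t : Continuous fun l : ℝ => l ^ (1 - t) :=
    continuous_iff_continuousAt.mpr fun l => Real.continuousAt_rpow_const l _ (Or.inr h1t.le)
  have main : cfc (fun l : ℝ =>
        (t*b + min (2*t) (1-2*t)*b) + (1-t) * l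
          + (min (2*t) (1-2*t) * b ^ ((1:ℝ)/2)) * l ^ ((1:ℝ)/2)
          + (-(2*(min (2*t) (1-2*t) * b ^ ((3:ℝ)/4)))) * l ^ ((1:ℝ)/4)) A
      ≤ cfc (fun l : ℝ =>
        ((1-t)*b) + (1-t) * l + (-(2*((1-t) * b ^ ((1:ℝ)/2)))) * l ^ ((1:ℝ)/2)
          + (b ^ t) * l ^ (1-t)) A := by
    apply cfc_mono
    · intro l hl
      have hk := key_ineq ht0 ht hb (hAspec l hl)
      nlinarith [hk]
    · exact (((continuous_const.add (continuous_const.mul continuous_id)).add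
        (continuous_const.mul c12)).add (continuous_const.mul c14)).continuousOn
    · exact (((continuous_const.add (continuous_const.mul continuous_id)).add
        (continuous_const.mul c12)).add (continuous_const.mul c1t)).continuousOn
  rw [cfc_comb_aux A hA _ _ _ _ ((1:ℝ)/2) ((1:ℝ)/4) (by norm_num) (by norm_num),
      cfc_comb_aux A hA _ _ _ _ ((1:ℝ)/2) (1-t) (by norm_num) h1t] at main
  have mono := ipPhi_mono Φ hΦ main x
  have expand : ∀ (c₀ c₁ c₂ c₃ : ℝ) (X Y Z : H →L[ℂ] H),
      ip (Φ (c₀ • (1:H →L[ℂ] H) + c₁ • X + c₂ • Y + c₃ • Z)) x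
        = c₀ + c₁ * ip (Φ X) x + c₂ * ip (Φ Y) x + c₃ * ip (Φ Z) x := by
    intro c₀ c₁ c₂ c₃ X Y Z
    rw [map_add, map_add, map_add, LinearMap.map_smul_of_tower, LinearMap.map_smul_of_tower, LinearMap.map_smul_of_tower,
      LinearMap.map_smul_of_tower, hΦ1, ip_add, ip_add, ip_add, ip_smul, ip_smul, ip_smul, ip_smul,
      ip_one hx]
    ring
  rw [expand, expand] at mono
  rw [max_eq_right ht1, min_eq_left ht1]
  nlinarith [mono]
end

section
/- For positive reals a, b and t ∈ [0,1] with N-term Sababheh refinement: S_N(t;a,b) ≤ t a + (1-t)b - a^t b^{1-t}, where S_N(t;a,b) = Σ_{j=1}^N s_j(t)((b^{2^{j-1}-k_j} a^{k_j})^{1/2^j} - (a^{k_j+1} b^{2^{j-1}-k_j-1})^{1/2^j})², s_j(t) = (-1)^{r_j} 2^{j-1} t + (-1)^{r_j+1} ⌊(r_j+1)/2⌋, r_j = ⌊2^j t⌋, k_j = ⌊2^{j-1} t⌋. Verify this for N = 1, where it reduces to: if 0 ≤ t ≤ 1/2 then t(√a - √b)² ≤ t a + (1-t)b - a^t b^{1-t},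 and if 1/2 ≤ t ≤ 1 then (1-t)(√a - √b)² ≤ t a + (1-t)b - a^t b^{1-t}. -/
/-- The `N = 1` case of Sababheh's refinement of Young's inequality: for `t ≤ 1/2` one has
`t(√a - √b)² ≤ ta + (1-t)b - aᵗb^{1-t}`, and for `t ≥ 1/2` one has
`(1-t)(√a - √b)² ≤ ta + (1-t)b - aᵗb^{1-t}`. -/
theorem sababheh_young_N_one (a b t : ℝ) (ha : 0 < a) (hb : 0 < b)
    (ht0 : 0 ≤ t) (ht1 : t ≤ 1) :
    (t ≤ 1 / 2 →
      t * (Real.sqrt a - Real.sqrt b) ^ 2 ≤ t * a + (1 - t) * b - a ^ t * b ^ (1 - t)) ∧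
    (1 / 2 ≤ t →
      (1 - t) * (Real.sqrt a - Real.sqrt b) ^ 2 ≤ t * a + (1 - t) * b - a ^ t * b ^ (1 - t)) := by
  have hsa : Real.sqrt a ^ 2 = a := Real.sq_sqrt ha.le
  have hsb : Real.sqrt b ^ 2 = b := Real.sq_sqrt hb.le
  have hab : Real.sqrt a * Real.sqrt b = Real.sqrt (a * b) := (Real.sqrt_mul ha.le b).symm
  have hsab : Real.sqrt (a * b) = (a * b) ^ ((1:ℝ)/2) := Real.sqrt_eq_rpow (a*b)
  have habpos : 0 < a * b := mul_pos ha hb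
  constructor
  · intro h
    have key : a ^ t * b ^ (1 - t) ≤ (2*t) * Real.sqrt (a*b) + (1 - 2*t) * b := by
      have hg := Real.geom_mean_le_arith_mean2_weighted (by linarith : (0:ℝ) ≤ 2*t)
        (by linarith : (0:ℝ) ≤ 1 - 2*t) (Real.sqrt_nonneg (a*b)) hb.le (by ring)
      have heq : a ^ t * b ^ (1 - t) = Real.sqrt (a*b) ^ (2*t) * b ^ (1 - 2*t) := by
        rw [hsab, ← Real.rpow_mul habpos.le]
        rw [show (1:ℝ)/2 * (2*t) = t by ring, Real.mul_rpow ha.le hb.le,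
          show (1:ℝ) - t = t + (1 - 2*t) by ring, Real.rpow_add hb]
        ring
      linarith [heq ▸ hg]
    nlinarith [key, hsa, hsb, hab]
  · intro h
    have key : a ^ t * b ^ (1 - t) ≤ (2*t - 1) * a + (2 - 2*t) * Real.sqrt (a*b) := by
      have hg := Real.geom_mean_le_arith_mean2_weighted (by linarith : (0:ℝ) ≤ 2*t - 1)
        (by linarith : (0:ℝ) ≤ 2 - 2*t) ha.le (Real.sqrt_nonneg (a*b)) (by ring)
      have heq : a ^ t * b ^ (1 - t) = a ^ (2*t - 1) * Real.sqrt (a*b) ^ (2 - 2*t) := by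
        rw [hsab, ← Real.rpow_mul habpos.le]
        rw [show (1:ℝ)/2 * (2 - 2*t) = 1 - t by ring, Real.mul_rpow ha.le hb.le,
          show (t:ℝ) = (2*t - 1) + (1 - t) by ring, Real.rpow_add ha]
        ring
      linarith [heq ▸ hg]
    nlinarith [key, hsa, hsb, hab]
end
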